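/- arXiv:1911.02716 — 3 statements merged into one kernel-verified Lean document; each statement's English description precedes it below -/
import Mathlib

section
/- Let M be a finite set of items, let v_1,…,v_n be monotone XOS valuations, and let O = (O_1,…,O_n) be an allocation of a set D = O_1 ∪ … ∪ O_n ⊆ M among these bidders that is supported by a price vector q. Let p be a vector of nonnegative prices with p_j ≤ q_j for every j ∈ D, and let A_1,…,A_n be a fixed-price auction outcome with prices p/2 (i.e., each item j has price p_j/2) for these bidders in some fixed order, with sold set A. Then Σ_{i=1}^n v_i(A_i) ≥ (1/2) · Σ_{j ∈ D \ A} q_j. -/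
open Finset

/-- A (normalized, monotone) valuation on the item set `M`. -/
def IsValuation {ι : Type*} (M : Finset ι) (v : Finset ι → ℝ) : Prop :=
  v ∅ = 0 ∧ ∀ S T : Finset ι, S ⊆ T → T ⊆ M → v S ≤ v T

/-- An XOS valuation on `M`: a pointwise maximum of finitely many nonnegative additive clauses. -/
def IsXOS {ι : Type*} (M : Finset ι) (v : Finset ι → ℝ) : Prop :=
  ∃ t : ℕ, ∃ a : Fin (t + 1) → ι → ℝ,
    (∀ r j, 0 ≤ a r j) ∧
    ∀ S ⊆ M, (∃ r, v S = ∑ j ∈ S, a r j) ∧ ∀ r, ∑ j ∈ S, a r j ≤ v S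

/-- The allocation `O` is supported by the price vector `q`: `q` is nonnegative and for each
bidder `i` there is a clause `a` of `v i` (a nonnegative additive function dominated by `v i`,
maximizing at `O i`) with `q j = a j` on `O i`. -/
def SupportedBy {ι : Type*} {n : ℕ} (M : Finset ι) (v : Fin n → Finset ι → ℝ)
    (O : Fin n → Finset ι) (q : ι → ℝ) : Prop :=
  (∀ j, 0 ≤ q j) ∧
  ∀ i, ∃ a : ι → ℝ, (∀ j, 0 ≤ a j) ∧ (∀ S ⊆ M, ∑ j ∈ S, a j ≤ v i S) ∧
    (∑ j ∈ O i, a j = v i (O i)) ∧ ∀ j ∈ O i, q j = a j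

/-- Items sold before bidder `i`'s turn. -/
def soldBefore {ι : Type*} [DecidableEq ι] {n : ℕ} (A : Fin n → Finset ι) (i : Fin n) :
    Finset ι :=
  (Finset.univ.filter (fun k => k < i)).biUnion A

/-- `A` is a fixed-price auction outcome with prices `p`: the bundles are pairwise disjoint and
each bidder `i` receives a bundle of still-available items maximizing `v i S - p (S)`. -/
def IsFixedPriceOutcome {ι : Type*} [DecidableEq ι] {n : ℕ} (M : Finset ι)
    (v : Fin n → Finset ι → ℝ) (p : ι → ℝ) (A : Fin n → Finset ι) : Prop :=
  (∀ i i', i ≠ i' → Disjoint (A i) (A i')) ∧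
  ∀ i : Fin n, A i ⊆ M \ soldBefore A i ∧
    ∀ S ⊆ M \ soldBefore A i, v i S - ∑ j ∈ S, p j ≤ v i (A i) - ∑ j ∈ A i, p j

/-- if `O` allocates `D = ⋃ i, O i ⊆ M` with supporting prices `q`, `p` is
nonnegative with `p ≤ q` on `D`, and `A` is a fixed-price auction outcome with prices `p/2`,
then the welfare of `A` is at least half the `q`-value of the unsold items of `D`. -/
theorem stmt4 {ι : Type*} [DecidableEq ι] {n : ℕ} (M : Finset ι)
    (v : Fin n → Finset ι → ℝ)
    (hval : ∀ i, IsValuation M (v i)) (hxos : ∀ i, IsXOS M (v i))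
    (O : Fin n → Finset ι) (hOsub : ∀ i, O i ⊆ M)
    (hOdisj : ∀ i i', i ≠ i' → Disjoint (O i) (O i'))
    (q : ι → ℝ) (hq : SupportedBy M v O q)
    (p : ι → ℝ) (hp : ∀ j, 0 ≤ p j)
    (hpq : ∀ j ∈ Finset.univ.biUnion O, p j ≤ q j)
    (A : Fin n → Finset ι) (hA : IsFixedPriceOutcome M v (fun j => p j / 2) A) :
    ∑ i, v i (A i) ≥
      (1 / 2 : ℝ) * ∑ j ∈ Finset.univ.biUnion O \ Finset.univ.biUnion A, q j := by
  obtain ⟨hq0, hcl⟩ := hq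
  set D := Finset.univ.biUnion O with hD
  set B := Finset.univ.biUnion A with hB
  have key : ∀ i, v i (A i) ≥ (1/2 : ℝ) * ∑ j ∈ O i \ B, q j := by
    intro i
    obtain ⟨a, ha0, hadom, haO, haq⟩ := hcl i
    have hTM : O i \ B ⊆ M \ soldBefore A i := by
      intro j hj
      simp only [Finset.mem_sdiff] at hj ⊢
      refine ⟨hOsub i hj.1, fun hjs => hj.2 ?_⟩
      simp only [soldBefore, Finset.mem_biUnion, Finset.mem_filter] at hjs
      obtain ⟨k, _, hk⟩ := hjs
      exact Finset.mem_biUnion.2 ⟨k, Finset.mem_univ _, hk⟩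
    have hmax := (hA.2 i).2 (O i \ B) hTM
    have h1 : ∑ j ∈ O i \ B, q j ≤ v i (O i \ B) := by
      calc ∑ j ∈ O i \ B, q j = ∑ j ∈ O i \ B, a j := by
            apply Finset.sum_congr rfl
            intro j hj
            exact haq j (Finset.mem_sdiff.1 hj).1
        _ ≤ v i (O i \ B) := hadom _ ((Finset.sdiff_subset).trans (hOsub i))
    have h2 : ∑ j ∈ O i \ B, p j / 2 ≤ (1/2 : ℝ) * ∑ j ∈ O i \ B, q j := by
      rw [Finset.mul_sum]
      apply Finset.sum_le_sum
      intro j hj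
      have : p j ≤ q j :=
        hpq j (Finset.mem_biUnion.2 ⟨i, Finset.mem_univ _, (Finset.mem_sdiff.1 hj).1⟩)
      linarith
    have h3 : 0 ≤ ∑ j ∈ A i, p j / 2 :=
      Finset.sum_nonneg (fun j _ => by have := hp j; linarith)
    linarith
  have hdisj : ((Finset.univ : Finset (Fin n)) : Set (Fin n)).PairwiseDisjoint (fun i => O i \ B) := by
    intro i _ i' _ hne
    exact (hOdisj i i' hne).mono Finset.sdiff_subset Finset.sdiff_subset
  have hsum : ∑ i, ∑ j ∈ O i \ B, q j = ∑ j ∈ D \ B, q j := by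
    rw [← Finset.sum_biUnion hdisj]
    congr 1
    ext j
    simp only [Finset.mem_biUnion, Finset.mem_sdiff, hD, Finset.mem_univ, true_and]
    tauto
  calc ∑ i, v i (A i) ≥ ∑ i, (1/2 : ℝ) * ∑ j ∈ O i \ B, q j :=
        Finset.sum_le_sum (fun i _ => key i)
    _ = (1/2 : ℝ) * ∑ j ∈ D \ B, q j := by rw [← Finset.mul_sum, hsum]
end

section
/- Let M be a finite set of items, let bidders 1,…,n (n ≥ 1) have monotone XOS valuations v_1,…,v_n, let O = (O_1,…,O_n) be an allocation of a set D = O_1 ∪ … ∪ O_n ⊆ M among these bidders supported by a price vector q, and let p be a vector of nonnegative prices with p_j ≤ q_j for every j ∈ D. Fix 1 ≤ k ≤ n, and for each bidder b fix a deterministic tie-breaking rule for the fixed-price auction with prices p/2. Draw a uniformly random permutation σ of {1,…,n} and run the fixed-price auction with prices p/2 on the bidders σ(1),…,σ(k) in this order; let A denote the (random) set of sold items and Val = Σ_{t=1}^{k} v_{σ(t)}(A_{σ(t)}) the (random) welfare. Then E[Val] ≥ (k/n) · E[ (1/2) · Σ_{j ∈ D' \ A} q_j ], where D' = ∪_{t>k}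 O_{σ(t)} is the (random) set of items that O allocates to the bidders not among the first k. -/
open Finset

/-- Items remaining after the first `t` steps of a greedy process that starts with `M` and at
step `t` removes `step t R` from the current remaining set `R`. -/
def runRemaining {ι : Type*} [DecidableEq ι] (M : Finset ι)
    (step : ℕ → Finset ι → Finset ι) : ℕ → Finset ι
  | 0 => M
  | t + 1 => runRemaining M step t \ step t (runRemaining M step t)

/-- The allocation rule induced by deterministic tie-breaking rules `c` and arrival order `σ`:
at step `t < n`, bidder `σ t` picks `c (σ t) R` from the remaining items `R`. -/
def auctionStep {ι : Type*} {n : ℕ} (c : Fin n → Finset ι → Finset ι)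
    (σ : Equiv.Perm (Fin n)) (t : ℕ) (R : Finset ι) : Finset ι :=
  if h : t < n then c (σ ⟨t, h⟩) R else ∅

section Stmt5Aux

variable {ι : Type*} [DecidableEq ι] {n : ℕ}

/-- The set allocated at step `t`. -/
def stmt5Al (M : Finset ι) (c : Fin n → Finset ι → Finset ι) (σ : Equiv.Perm (Fin n))
    (t : ℕ) : Finset ι :=
  auctionStep c σ t (runRemaining M (auctionStep c σ) t)

/-- The set of items sold in the first `k` steps. -/
def stmt5As (M : Finset ι) (c : Fin n → Finset ι → Finset ι) (k : ℕ)
    (σ : Equiv.Perm (Fin n)) : Finset ι :=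
  (Finset.range k).biUnion (fun t => stmt5Al M c σ t)

lemma stmt5_auctionStep_lt (c : Fin n → Finset ι → Finset ι) (σ : Equiv.Perm (Fin n))
    {t : ℕ} (h : t < n) (R : Finset ι) : auctionStep c σ t R = c (σ ⟨t, h⟩) R :=
  dif_pos h

lemma stmt5_runRemaining_subset (M : Finset ι) (step : ℕ → Finset ι → Finset ι) :
    ∀ t, runRemaining M step t ⊆ M
  | 0 => Finset.Subset.refl _
  | t + 1 => Finset.Subset.trans Finset.sdiff_subset (stmt5_runRemaining_subset M step t)

lemma stmt5_runRemaining_congr (M : Finset ι) (step step' : ℕ → Finset ι → Finset ι)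
    (t : ℕ) (h : ∀ r < t, step r = step' r) :
    runRemaining M step t = runRemaining M step' t := by
  induction t with
  | zero => rfl
  | succ u ih =>
    have hu : runRemaining M step u = runRemaining M step' u :=
      ih (fun r hr => h r (Nat.lt_succ_of_lt hr))
    show runRemaining M step u \ step u (runRemaining M step u)
        = runRemaining M step' u \ step' u (runRemaining M step' u)
    rw [hu, h u (Nat.lt_succ_self u)]

lemma stmt5_mem_runRemaining (M : Finset ι) (step : ℕ → Finset ι → Finset ι)
    {x : ι} (hx : x ∈ M) :
    ∀ t, (∀ u < t, x ∉ step u (runRemaining M step u)) → x ∈ runRemaining M step t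
  | 0, _ => hx
  | t + 1, h => by
    show x ∈ runRemaining M step t \ step t (runRemaining M step t)
    rw [Finset.mem_sdiff]
    exact ⟨stmt5_mem_runRemaining M step hx t (fun u hu => h u (Nat.lt_succ_of_lt hu)),
      h t (Nat.lt_succ_self t)⟩

/-- Key pointwise bound: the bidder `b`, facing remaining set `R`, obtains value at least
half the `q`-value of any candidate set `S ⊆ R ∩ O b`. -/
lemma stmt5_key (M : Finset ι) (v : Fin n → Finset ι → ℝ) (O : Fin n → Finset ι)
    (q p : ι → ℝ) (hq : SupportedBy M v O q) (hp : ∀ j, 0 ≤ p j)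
    (hpq : ∀ j ∈ Finset.univ.biUnion O, p j ≤ q j)
    (c : Fin n → Finset ι → Finset ι)
    (hc : ∀ b : Fin n, ∀ R ⊆ M, c b R ⊆ R ∧
      ∀ S ⊆ R, v b S - ∑ j ∈ S, p j / 2 ≤ v b (c b R) - ∑ j ∈ c b R, p j / 2)
    (b : Fin n) (R S : Finset ι) (hR : R ⊆ M) (hSR : S ⊆ R) (hSO : S ⊆ O b) :
    (1 / 2 : ℝ) * ∑ j ∈ S, q j ≤ v b (c b R) := by
  obtain ⟨hq0, hcl⟩ := hq
  obtain ⟨a, ha0, haV, haO, haq⟩ := hcl b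
  have h1 : ∑ j ∈ S, q j = ∑ j ∈ S, a j :=
    Finset.sum_congr rfl fun j hj => haq j (hSO hj)
  have h2 : ∑ j ∈ S, a j ≤ v b S := haV S (hSR.trans hR)
  have h3 : ∑ j ∈ S, p j / 2 ≤ ∑ j ∈ S, q j / 2 := by
    refine Finset.sum_le_sum fun j hj => ?_
    have : p j ≤ q j := hpq j (Finset.mem_biUnion.2 ⟨b, Finset.mem_univ b, hSO hj⟩)
    linarith
  have h4 := (hc b R hR).2 S hSR
  have h5 : (0 : ℝ) ≤ ∑ j ∈ c b R, p j / 2 :=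
    Finset.sum_nonneg fun j _ => by have := hp j; linarith
  have h6 : ∑ j ∈ S, q j / 2 = (1 / 2 : ℝ) * ∑ j ∈ S, q j := by
    rw [Finset.mul_sum]
    exact Finset.sum_congr rfl fun j _ => by ring
  linarith

/-- The swap argument: bidder `σ s` brought forward to position `t` (with everything
before position `t` unchanged) gets value at least half the `q`-value of
`O (σ s) \ A σ`. -/
lemma stmt5_swap (M : Finset ι) (v : Fin n → Finset ι → ℝ) (O : Fin n → Finset ι)
    (hOsub : ∀ i, O i ⊆ M)
    (q p : ι → ℝ) (hq : SupportedBy M v O q) (hp : ∀ j, 0 ≤ p j)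
    (hpq : ∀ j ∈ Finset.univ.biUnion O, p j ≤ q j)
    (c : Fin n → Finset ι → Finset ι)
    (hc : ∀ b : Fin n, ∀ R ⊆ M, c b R ⊆ R ∧
      ∀ S ⊆ R, v b S - ∑ j ∈ S, p j / 2 ≤ v b (c b R) - ∑ j ∈ c b R, p j / 2)
    (k : ℕ) (hkn : k ≤ n) (t : Fin k) (s : Fin n) (hs : k ≤ (s : ℕ))
    (σ : Equiv.Perm (Fin n)) :
    (1 / 2 : ℝ) * ∑ j ∈ O (σ s) \ stmt5As M c k σ, q j
      ≤ v ((σ * Equiv.swap (Fin.castLE hkn t) s) (Fin.castLE hkn t))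
          (stmt5Al M c (σ * Equiv.swap (Fin.castLE hkn t) s) (t : ℕ)) := by
  set a : Fin n := Fin.castLE hkn t with ha
  set σ' : Equiv.Perm (Fin n) := σ * Equiv.swap a s with hσ'
  have htk : (t : ℕ) < k := t.2
  have htn : (t : ℕ) < n := lt_of_lt_of_le htk hkn
  have hav : (a : ℕ) = (t : ℕ) := rfl
  have hσ'a : σ' a = σ s := by
    rw [hσ', Equiv.Perm.mul_apply, Equiv.swap_apply_left]
  have hstep : ∀ r < (t : ℕ), auctionStep c σ' r = auctionStep c σ r := by
    intro r hr
    funext R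
    unfold auctionStep
    by_cases h : r < n
    · rw [dif_pos h, dif_pos h]
      have h1 : (⟨r, h⟩ : Fin n) ≠ a := by
        intro hcon
        have := congrArg Fin.val hcon
        simp only [hav] at this
        omega
      have h2 : (⟨r, h⟩ : Fin n) ≠ s := by
        intro hcon
        have := congrArg Fin.val hcon
        simp only at this
        omega
      rw [hσ', Equiv.Perm.mul_apply, Equiv.swap_apply_of_ne_of_ne h1 h2]
    · rw [dif_neg h, dif_neg h]
  have hRem : runRemaining M (auctionStep c σ') (t : ℕ)
      = runRemaining M (auctionStep c σ) (t : ℕ) :=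
    stmt5_runRemaining_congr M _ _ _ hstep
  have hAl : stmt5Al M c σ' (t : ℕ)
      = c (σ s) (runRemaining M (auctionStep c σ) (t : ℕ)) := by
    show auctionStep c σ' (t : ℕ) (runRemaining M (auctionStep c σ') (t : ℕ)) = _
    rw [hRem, stmt5_auctionStep_lt c σ' htn]
    have h1 : (⟨(t : ℕ), htn⟩ : Fin n) = a := rfl
    rw [h1, hσ'a]
  have hSsub : O (σ s) \ stmt5As M c k σ ⊆ runRemaining M (auctionStep c σ) (t : ℕ) := by
    intro x hx
    rw [Finset.mem_sdiff] at hx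
    refine stmt5_mem_runRemaining M _ (hOsub (σ s) hx.1) _ ?_
    intro u hu hxu
    exact hx.2 (Finset.mem_biUnion.2 ⟨u, Finset.mem_range.2 (hu.trans htk), hxu⟩)
  rw [hσ'a, hAl]
  exact stmt5_key M v O q p hq hp hpq c hc (σ s) _ _
    (stmt5_runRemaining_subset M _ _) hSsub Finset.sdiff_subset

end Stmt5Aux

/-- random-arrival welfare of fixed-price auctions, cf. Claim 5.4: running the
fixed-price auction with prices `p/2` on the first `k` bidders of a uniformly random order, the
expected welfare is at least `k/n` times the expected half-`q`-value of the unsold items that `O`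
allocates to the remaining `n - k` bidders. Expectations over the `n!` permutations are written
as averages. -/
theorem stmt5 {ι : Type*} [DecidableEq ι] {n : ℕ} (hn : 1 ≤ n) (M : Finset ι)
    (v : Fin n → Finset ι → ℝ)
    (hval : ∀ i, IsValuation M (v i)) (hxos : ∀ i, IsXOS M (v i))
    (O : Fin n → Finset ι) (hOsub : ∀ i, O i ⊆ M)
    (hOdisj : ∀ i i', i ≠ i' → Disjoint (O i) (O i'))
    (q : ι → ℝ) (hq : SupportedBy M v O q)
    (p : ι → ℝ) (hp : ∀ j, 0 ≤ p j)
    (hpq : ∀ j ∈ Finset.univ.biUnion O, p j ≤ q j)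
    (k : ℕ) (hk1 : 1 ≤ k) (hkn : k ≤ n)
    (c : Fin n → Finset ι → Finset ι)
    (hc : ∀ b : Fin n, ∀ R ⊆ M, c b R ⊆ R ∧
      ∀ S ⊆ R, v b S - ∑ j ∈ S, p j / 2 ≤ v b (c b R) - ∑ j ∈ c b R, p j / 2) :
    (∑ σ : Equiv.Perm (Fin n), ∑ t : Fin k,
        v (σ (Fin.castLE hkn t))
          (auctionStep c σ (t : ℕ) (runRemaining M (auctionStep c σ) (t : ℕ))))
      / (Nat.factorial n : ℝ)
    ≥ ((k : ℝ) / (n : ℝ)) *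
      ((∑ σ : Equiv.Perm (Fin n), (1 / 2 : ℝ) *
          ∑ j ∈ ((Finset.univ.filter (fun t : Fin n => k ≤ (t : ℕ))).biUnion
                (fun t => O (σ t))) \
              ((Finset.range k).biUnion
                (fun t => auctionStep c σ t (runRemaining M (auctionStep c σ) t))),
            q j)
        / (Nat.factorial n : ℝ)) := by
  classical
  show (∑ σ : Equiv.Perm (Fin n), ∑ t : Fin k,
        v (σ (Fin.castLE hkn t)) (stmt5Al M c σ (t : ℕ))) / (Nat.factorial n : ℝ)
      ≥ ((k : ℝ) / (n : ℝ)) *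
        ((∑ σ : Equiv.Perm (Fin n), (1 / 2 : ℝ) *
            ∑ j ∈ ((Finset.univ.filter (fun t : Fin n => k ≤ (t : ℕ))).biUnion
                  (fun t => O (σ t))) \ stmt5As M c k σ, q j) / (Nat.factorial n : ℝ))
  set F : Equiv.Perm (Fin n) → Fin k → ℝ :=
    fun σ t => v (σ (Fin.castLE hkn t)) (stmt5Al M c σ (t : ℕ)) with hF
  set L : ℝ := ∑ σ : Equiv.Perm (Fin n), ∑ t : Fin k, F σ t with hL
  set R : ℝ := ∑ σ : Equiv.Perm (Fin n), (1 / 2 : ℝ) *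
      ∑ j ∈ ((Finset.univ.filter (fun t : Fin n => k ≤ (t : ℕ))).biUnion
            (fun t => O (σ t))) \ stmt5As M c k σ, q j with hR
  -- each term of L is nonnegative
  have hF0 : ∀ (σ : Equiv.Perm (Fin n)) (t : Fin k), 0 ≤ F σ t := by
    intro σ t
    have htn : (t : ℕ) < n := lt_of_lt_of_le t.2 hkn
    have hAl : stmt5Al M c σ (t : ℕ)
        = c (σ (Fin.castLE hkn t)) (runRemaining M (auctionStep c σ) (t : ℕ)) := by
      show auctionStep c σ (t : ℕ) (runRemaining M (auctionStep c σ) (t : ℕ)) = _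
      rw [stmt5_auctionStep_lt c σ htn]
      rfl
    have hRM : runRemaining M (auctionStep c σ) (t : ℕ) ⊆ M :=
      stmt5_runRemaining_subset M _ _
    have hsub : stmt5Al M c σ (t : ℕ) ⊆ M := by
      rw [hAl]
      exact (hc _ _ hRM).1.trans hRM
    have hmono := (hval (σ (Fin.castLE hkn t))).2 ∅ (stmt5Al M c σ (t : ℕ))
      (Finset.empty_subset _) hsub
    rw [(hval (σ (Fin.castLE hkn t))).1] at hmono
    exact hmono
  have hL0 : (0 : ℝ) ≤ L := by
    refine Finset.sum_nonneg fun σ _ => Finset.sum_nonneg fun t _ => hF0 σ t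
  -- rewrite R as a double sum
  have hRsplit : R = ∑ s ∈ Finset.univ.filter (fun t : Fin n => k ≤ (t : ℕ)),
      ∑ σ : Equiv.Perm (Fin n), (1 / 2 : ℝ) * ∑ j ∈ O (σ s) \ stmt5As M c k σ, q j := by
    rw [hR, Finset.sum_comm]
    refine Finset.sum_congr rfl fun σ _ => ?_
    have hset : ((Finset.univ.filter (fun t : Fin n => k ≤ (t : ℕ))).biUnion
          (fun t => O (σ t))) \ stmt5As M c k σ
        = (Finset.univ.filter (fun t : Fin n => k ≤ (t : ℕ))).biUnion
          (fun s => O (σ s) \ stmt5As M c k σ) := by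
      ext x
      simp only [Finset.mem_sdiff, Finset.mem_biUnion]
      tauto
    rw [hset, Finset.sum_biUnion (fun x _ y _ hxy =>
      (hOdisj (σ x) (σ y) (fun h => hxy (σ.injective h))).mono
        Finset.sdiff_subset Finset.sdiff_subset), Finset.mul_sum]
  -- for each t < k and s ≥ k, the σ-average of the swapped bound
  have hmain : ∀ (t : Fin k), ∀ s ∈ Finset.univ.filter (fun t : Fin n => k ≤ (t : ℕ)),
      (∑ σ : Equiv.Perm (Fin n), (1 / 2 : ℝ) * ∑ j ∈ O (σ s) \ stmt5As M c k σ, q j)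
        ≤ ∑ σ : Equiv.Perm (Fin n), F σ t := by
    intro t s hs
    rw [Finset.mem_filter] at hs
    have hsk : k ≤ (s : ℕ) := hs.2
    have hre : (∑ σ : Equiv.Perm (Fin n), F σ t)
        = ∑ σ : Equiv.Perm (Fin n), F (σ * Equiv.swap (Fin.castLE hkn t) s) t := by
      exact (Equiv.sum_comp (Equiv.mulRight (Equiv.swap (Fin.castLE hkn t) s))
        (fun σ => F σ t)).symm
    rw [hre]
    refine Finset.sum_le_sum fun σ _ => ?_
    exact stmt5_swap M v O hOsub q p hq hp hpq c hc k hkn t s hsk σ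
  -- combine: k * R ≤ n * L
  have hkR : (k : ℝ) * R ≤ (n : ℝ) * L := by
    have hcard : (Finset.univ.filter (fun t : Fin n => k ≤ (t : ℕ))).card ≤ n := by
      calc (Finset.univ.filter (fun t : Fin n => k ≤ (t : ℕ))).card
          ≤ (Finset.univ : Finset (Fin n)).card := Finset.card_filter_le _ _
        _ = n := by simp
    have hRle : ∀ t : Fin k, R ≤ (n : ℝ) * ∑ σ : Equiv.Perm (Fin n), F σ t := by
      intro t
      have hZ0 : (0 : ℝ) ≤ ∑ σ : Equiv.Perm (Fin n), F σ t :=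
        Finset.sum_nonneg fun σ _ => hF0 σ t
      calc R = ∑ s ∈ Finset.univ.filter (fun t : Fin n => k ≤ (t : ℕ)),
            ∑ σ : Equiv.Perm (Fin n), (1 / 2 : ℝ) * ∑ j ∈ O (σ s) \ stmt5As M c k σ, q j :=
            hRsplit
        _ ≤ ∑ s ∈ Finset.univ.filter (fun t : Fin n => k ≤ (t : ℕ)),
            ∑ σ : Equiv.Perm (Fin n), F σ t :=
            Finset.sum_le_sum fun s hs => hmain t s hs
        _ = ((Finset.univ.filter (fun t : Fin n => k ≤ (t : ℕ))).card : ℝ) *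
            ∑ σ : Equiv.Perm (Fin n), F σ t := by
            rw [Finset.sum_const, nsmul_eq_mul]
        _ ≤ (n : ℝ) * ∑ σ : Equiv.Perm (Fin n), F σ t := by
            have : ((Finset.univ.filter (fun t : Fin n => k ≤ (t : ℕ))).card : ℝ) ≤ (n : ℝ) :=
              Nat.cast_le.2 hcard
            exact mul_le_mul_of_nonneg_right this hZ0
    calc (k : ℝ) * R = ∑ _t : Fin k, R := by
          rw [Finset.sum_const, Finset.card_univ, Fintype.card_fin, nsmul_eq_mul]
      _ ≤ ∑ t : Fin k, (n : ℝ) * ∑ σ : Equiv.Perm (Fin n), F σ t :=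
          Finset.sum_le_sum fun t _ => hRle t
      _ = (n : ℝ) * ∑ t : Fin k, ∑ σ : Equiv.Perm (Fin n), F σ t := by
          rw [Finset.mul_sum]
      _ = (n : ℝ) * L := by rw [hL, Finset.sum_comm]
  -- finish
  have hn0 : (0 : ℝ) < (n : ℝ) := by exact_mod_cast hn
  have hfac : (0 : ℝ) < (Nat.factorial n : ℝ) := by
    exact_mod_cast Nat.factorial_pos n
  rw [ge_iff_le]
  have h1 : (k : ℝ) / (n : ℝ) * (R / (Nat.factorial n : ℝ))
      = ((k : ℝ) * R) / ((n : ℝ) * (Nat.factorial n : ℝ)) := by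
    field_simp
  have h2 : L / (Nat.factorial n : ℝ)
      = ((n : ℝ) * L) / ((n : ℝ) * (Nat.factorial n : ℝ)) := by
    rw [mul_div_mul_left _ _ (ne_of_gt hn0)]
  rw [h1, h2]
  gcongr
end

section
/- Let M be a finite set of items, let bidders 1,…,n (n ≥ 1) have monotone XOS valuations v_1,…,v_n, let O = (O_1,…,O_n) be an allocation of a set D = O_1 ∪ … ∪ O_n ⊆ M among these bidders supported by a price vector q, and let p be a vector of nonnegative prices with p_j ≤ q_j for every j ∈ D. Fix 1 ≤ k ≤ n, and for each bidder fix a deterministic tie-breaking rule for the fixed-price auction with prices p/2. Draw a uniformly random permutation σ of {1,…,n} and run the fixed-price auction with prices p/2 on the bidders σ(1),…,σ(k) in this order; let A denote the (random) set of sold items and Val = Σ_{t=1}^{k} v_{σ(t)}(A_{σ(t)}) the (random) welfare. Then (2n/k) · E[Val] + E[ Σ_{j ∈ A ∩ D} q_j ] ≥ Σ_{j ∈ D} q_j. -/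
open Finset

section Aux
variable {ι : Type*} [DecidableEq ι]

lemma mem_runRemaining (M : Finset ι) (step : ℕ → Finset ι → Finset ι) (j : ι) :
    ∀ t : ℕ, (j ∈ runRemaining M step t ↔ j ∈ M ∧ ∀ s < t, j ∉ step s (runRemaining M step s))
  | 0 => by simp [runRemaining]
  | t + 1 => by
    rw [runRemaining, Finset.mem_sdiff, mem_runRemaining M step j t]
    constructor
    · rintro ⟨⟨hM, h⟩, h2⟩
      refine ⟨hM, fun s hs => ?_⟩
      rcases Nat.lt_succ_iff_lt_or_eq.mp hs with h' | rfl
      · exact h s h'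
      · exact h2
    · rintro ⟨hM, h⟩
      exact ⟨⟨hM, fun s hs => h s (hs.trans (Nat.lt_succ_self t))⟩, h t (Nat.lt_succ_self t)⟩

lemma runRemaining_subset (M : Finset ι) (step : ℕ → Finset ι → Finset ι) (t : ℕ) :
    runRemaining M step t ⊆ M := fun j hj => ((mem_runRemaining M step j t).mp hj).1

lemma runRemaining_prefix {n : ℕ} (M : Finset ι) (c : Fin n → Finset ι → Finset ι)
    (σ σ' : Equiv.Perm (Fin n)) (u : ℕ)
    (h : ∀ t, t < u → ∀ ht : t < n, σ ⟨t, ht⟩ = σ' ⟨t, ht⟩) :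
    ∀ t, t ≤ u → runRemaining M (auctionStep c σ) t = runRemaining M (auctionStep c σ') t
  | 0, _ => rfl
  | t + 1, ht => by
    have htu : t < u := Nat.lt_of_succ_le ht
    have ih := runRemaining_prefix M c σ σ' u h t (Nat.le_of_lt htu)
    rw [runRemaining, runRemaining, ih]
    congr 1
    unfold auctionStep
    split
    · rename_i htn
      rw [h t htu htn]
    · rfl

lemma auctionStep_prefix {n : ℕ} (M : Finset ι) (c : Fin n → Finset ι → Finset ι)
    (σ σ' : Equiv.Perm (Fin n)) (u : ℕ)
    (h : ∀ t, t < u → ∀ ht : t < n, σ ⟨t, ht⟩ = σ' ⟨t, ht⟩) (t : ℕ) (htu : t < u) :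
    auctionStep c σ t (runRemaining M (auctionStep c σ) t)
      = auctionStep c σ' t (runRemaining M (auctionStep c σ') t) := by
  rw [runRemaining_prefix M c σ σ' u h t (Nat.le_of_lt htu)]
  unfold auctionStep
  split
  · rename_i htn
    rw [h t htu htn]
  · rfl

end Aux

def insertPerm {m : ℕ} (i u : Fin (m + 1)) (τ : Equiv.Perm (Fin m)) : Equiv.Perm (Fin (m + 1)) :=
  (finSuccEquiv' u).trans ((Equiv.optionCongr τ).trans (finSuccEquiv' i).symm)

lemma insertPerm_at {m : ℕ} (i u : Fin (m + 1)) (τ : Equiv.Perm (Fin m)) :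
    insertPerm i u τ u = i := by
  simp [insertPerm]

lemma insertPerm_succAbove {m : ℕ} (i u : Fin (m + 1)) (τ : Equiv.Perm (Fin m)) (t : Fin m) :
    insertPerm i u τ (u.succAbove t) = i.succAbove (τ t) := by
  simp [insertPerm]

lemma insertPerm_lt {m : ℕ} (i u : Fin (m + 1)) (τ : Equiv.Perm (Fin m)) (t : ℕ)
    (htu : t < (u : ℕ)) (ht : t < m + 1) :
    insertPerm i u τ ⟨t, ht⟩ = i.succAbove (τ ⟨t, by omega⟩) := by
  have htm : t < m := by omega
  have : (⟨t, ht⟩ : Fin (m + 1)) = u.succAbove ⟨t, htm⟩ := by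
    rw [Fin.succAbove_of_castSucc_lt]
    · rfl
    · exact htu
  rw [this, insertPerm_succAbove]

lemma insertPerm_symm_self {m : ℕ} (i u : Fin (m + 1)) (τ : Equiv.Perm (Fin m)) :
    (insertPerm i u τ).symm i = u := by
  rw [Equiv.symm_apply_eq, insertPerm_at]

lemma insertPerm_bijective {m : ℕ} (i : Fin (m + 1)) :
    Function.Bijective (fun x : Equiv.Perm (Fin m) × Fin (m + 1) => insertPerm i x.2 x.1) := by
  rw [Fintype.bijective_iff_injective_and_card]
  constructor
  · rintro ⟨τ, u⟩ ⟨τ', u'⟩ h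
    simp only at h
    have hu : u = u' := by
      by_contra hne
      obtain ⟨t, ht⟩ := Fin.exists_succAbove_eq (hne : u ≠ u')
      have h1 : insertPerm i u τ u = i := insertPerm_at i u τ
      rw [h, ← ht, insertPerm_succAbove] at h1
      exact Fin.succAbove_ne i (τ' t) h1
    subst hu
    have hτ : τ = τ' := by
      ext t
      have := congrFun (congrArg (fun (e : Equiv.Perm (Fin (m+1))) => (e : Fin (m+1) → Fin (m+1)))
        h) (u.succAbove t)
      simp only [insertPerm_succAbove] at this
      have := Fin.succAbove_right_injective (p := i) this
      exact congrArg Fin.val this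
    simp [hτ]
  · simp [Fintype.card_perm, Nat.factorial_succ, Nat.mul_comm]


section Count

lemma fin_count_le (nn s : ℕ) (hs : s < nn) :
    ∑ u : Fin nn, (if (u : ℕ) ≤ s then 1 else 0 : ℕ) = s + 1 := by
  rw [Fin.sum_univ_eq_sum_range (fun t => if t ≤ s then 1 else 0) nn, ← Finset.card_filter]
  have : (Finset.range nn).filter (fun t => t ≤ s) = Finset.range (s + 1) := by
    ext a; simp only [Finset.mem_filter, Finset.mem_range]; omega
  rw [this, Finset.card_range]

lemma fin_count_gt (nn s : ℕ) :
    ∑ u : Fin nn, (if s < (u : ℕ) then 1 else 0 : ℕ) = nn - s - 1 := by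
  rw [Fin.sum_univ_eq_sum_range (fun t => if s < t then 1 else 0) nn, ← Finset.card_filter]
  have : (Finset.range nn).filter (fun t => s < t) = Finset.Ico (s + 1) nn := by
    ext a; simp only [Finset.mem_filter, Finset.mem_range, Finset.mem_Ico]; omega
  rw [this, Nat.card_Ico]; omega

lemma fin_count_lt (nn k : ℕ) (hk : k ≤ nn) :
    ∑ u : Fin nn, (if (u : ℕ) < k then 1 else 0 : ℕ) = k := by
  rw [Fin.sum_univ_eq_sum_range (fun t => if t < k then 1 else 0) nn, ← Finset.card_filter]
  have : (Finset.range nn).filter (fun t => t < k) = Finset.range k := by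
    ext a; simp only [Finset.mem_filter, Finset.mem_range]; omega
  rw [this, Finset.card_range]

end Count

section KL
variable {ι : Type*} [DecidableEq ι]

lemma countLemma {m : ℕ} (M : Finset ι) (c : Fin (m + 1) → Finset ι → Finset ι)
    (k : ℕ) (hkn : k ≤ m + 1) (i : Fin (m + 1)) (j : ι) (hj : j ∈ M) (τ : Equiv.Perm (Fin m)) :
    k * (m + 1) ≤
      (m + 1) * ∑ u : Fin (m + 1),
        (if ((insertPerm i u τ).symm i : ℕ) < k ∧
            j ∈ runRemaining M (auctionStep c (insertPerm i u τ))
              ((insertPerm i u τ).symm i : ℕ) then 1 else 0)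
      + k * ∑ u : Fin (m + 1),
        (if j ∈ (Finset.range k).biUnion
            (fun t => auctionStep c (insertPerm i u τ) t
              (runRemaining M (auctionStep c (insertPerm i u τ)) t)) then 1 else 0) := by
  set σL := insertPerm i (Fin.last m) τ with hσL
  have hagree : ∀ (u : Fin (m + 1)) (t : ℕ), t < (u : ℕ) → ∀ ht : t < m + 1,
      insertPerm i u τ ⟨t, ht⟩ = σL ⟨t, ht⟩ := by
    intro u t htu ht
    have htm : t < m := by have := u.isLt; omega
    rw [insertPerm_lt i u τ t htu ht, hσL, insertPerm_lt i (Fin.last m) τ t (by simp [Fin.last]; omega) ht]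
  have hpick : ∀ (u : Fin (m + 1)) (t : ℕ), t < (u : ℕ) →
      auctionStep c (insertPerm i u τ) t (runRemaining M (auctionStep c (insertPerm i u τ)) t)
        = auctionStep c σL t (runRemaining M (auctionStep c σL) t) := by
    intro u t htu
    exact auctionStep_prefix M c _ _ (u : ℕ) (hagree u) t htu
  by_cases hex : ∃ s, s < k ∧ j ∈ auctionStep c σL s (runRemaining M (auctionStep c σL) s)
  · set s := Nat.find hex with hsdef
    obtain ⟨hsk, hsmem⟩ := Nat.find_spec hex
    have hmin : ∀ t, t < s → j ∉ auctionStep c σL t (runRemaining M (auctionStep c σL) t) := by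
      intro t ht hmem
      exact Nat.find_min hex ht ⟨ht.trans hsk, hmem⟩
    have hE : ∀ u : Fin (m + 1), (u : ℕ) ≤ s →
        (((insertPerm i u τ).symm i : ℕ) < k ∧
          j ∈ runRemaining M (auctionStep c (insertPerm i u τ))
            ((insertPerm i u τ).symm i : ℕ)) := by
      intro u hus
      rw [insertPerm_symm_self]
      refine ⟨by omega, (mem_runRemaining M _ j (u : ℕ)).mpr ⟨hj, fun t ht => ?_⟩⟩
      rw [hpick u t ht]
      exact hmin t (by omega)
    have hA : ∀ u : Fin (m + 1), s < (u : ℕ) →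
        j ∈ (Finset.range k).biUnion
          (fun t => auctionStep c (insertPerm i u τ) t
            (runRemaining M (auctionStep c (insertPerm i u τ)) t)) := by
      intro u hsu
      refine Finset.mem_biUnion.mpr ⟨s, Finset.mem_range.mpr hsk, ?_⟩
      rw [hpick u s hsu]
      exact hsmem
    have hE' : (s + 1 : ℕ) ≤ ∑ u : Fin (m + 1),
        (if ((insertPerm i u τ).symm i : ℕ) < k ∧
            j ∈ runRemaining M (auctionStep c (insertPerm i u τ))
              ((insertPerm i u τ).symm i : ℕ) then 1 else 0) := by
      refine le_trans (le_of_eq (fin_count_le (m + 1) s (by omega)).symm) (Finset.sum_le_sum ?_)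
      intro u _
      by_cases h : (u : ℕ) ≤ s
      · simp [h, hE u h]
      · simp [h]
    have hA' : (m - s : ℕ) ≤ ∑ u : Fin (m + 1),
        (if j ∈ (Finset.range k).biUnion
            (fun t => auctionStep c (insertPerm i u τ) t
              (runRemaining M (auctionStep c (insertPerm i u τ)) t)) then 1 else 0) := by
      have := fin_count_gt (m + 1) s
      rw [show m + 1 - s - 1 = m - s by omega] at this
      refine le_trans (le_of_eq this.symm) (Finset.sum_le_sum ?_)
      intro u _
      by_cases h : s < (u : ℕ)
      · simp [h, hA u h]
      · simp [h]
    have harith : k * (m + 1) ≤ (m + 1) * (s + 1) + k * (m - s) := by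
      have h1 : k * (m + 1) = k * (s + 1) + k * (m - s) := by
        rw [← Nat.mul_add]; congr 1; omega
      have h2 : k * (s + 1) ≤ (m + 1) * (s + 1) := Nat.mul_le_mul_right _ hkn
      omega
    calc k * (m + 1) ≤ (m + 1) * (s + 1) + k * (m - s) := harith
      _ ≤ _ := Nat.add_le_add (Nat.mul_le_mul_left _ hE') (Nat.mul_le_mul_left _ hA')
  · push_neg at hex
    have hE : ∀ u : Fin (m + 1), (u : ℕ) < k →
        (((insertPerm i u τ).symm i : ℕ) < k ∧
          j ∈ runRemaining M (auctionStep c (insertPerm i u τ))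
            ((insertPerm i u τ).symm i : ℕ)) := by
      intro u huk
      rw [insertPerm_symm_self]
      refine ⟨huk, (mem_runRemaining M _ j (u : ℕ)).mpr ⟨hj, fun t ht => ?_⟩⟩
      rw [hpick u t ht]
      exact hex t (by omega)
    have hE' : k ≤ ∑ u : Fin (m + 1),
        (if ((insertPerm i u τ).symm i : ℕ) < k ∧
            j ∈ runRemaining M (auctionStep c (insertPerm i u τ))
              ((insertPerm i u τ).symm i : ℕ) then 1 else 0) := by
      refine le_trans (le_of_eq (fin_count_lt (m + 1) k hkn).symm) (Finset.sum_le_sum ?_)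
      intro u _
      by_cases h : (u : ℕ) < k
      · simp [h, hE u h]
      · simp [h]
    calc k * (m + 1) = (m + 1) * k := Nat.mul_comm _ _
      _ ≤ (m + 1) * _ := Nat.mul_le_mul_left _ hE'
      _ ≤ _ := Nat.le_add_right _ _

lemma KL {m : ℕ} (M : Finset ι) (c : Fin (m + 1) → Finset ι → Finset ι)
    (k : ℕ) (hkn : k ≤ m + 1) (i : Fin (m + 1)) (j : ι) (hj : j ∈ M) :
    k * (m + 1).factorial ≤
      (m + 1) * ∑ σ : Equiv.Perm (Fin (m + 1)),
        (if ((σ.symm i : Fin (m + 1)) : ℕ) < k ∧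
            j ∈ runRemaining M (auctionStep c σ) ((σ.symm i : Fin (m + 1)) : ℕ) then 1 else 0)
      + k * ∑ σ : Equiv.Perm (Fin (m + 1)),
        (if j ∈ (Finset.range k).biUnion
            (fun t => auctionStep c σ t (runRemaining M (auctionStep c σ) t)) then 1 else 0) := by
  have hbij := insertPerm_bijective (m := m) i
  have hE := Fintype.sum_bijective _ hbij
    (fun x : Equiv.Perm (Fin m) × Fin (m + 1) =>
      (if ((insertPerm i x.2 x.1).symm i : ℕ) < k ∧
          j ∈ runRemaining M (auctionStep c (insertPerm i x.2 x.1))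
            ((insertPerm i x.2 x.1).symm i : ℕ) then 1 else 0))
    (fun σ => (if ((σ.symm i : Fin (m + 1)) : ℕ) < k ∧
          j ∈ runRemaining M (auctionStep c σ) ((σ.symm i : Fin (m + 1)) : ℕ) then 1 else 0))
    (fun x => rfl)
  have hA := Fintype.sum_bijective _ hbij
    (fun x : Equiv.Perm (Fin m) × Fin (m + 1) =>
      (if j ∈ (Finset.range k).biUnion
          (fun t => auctionStep c (insertPerm i x.2 x.1) t
            (runRemaining M (auctionStep c (insertPerm i x.2 x.1)) t)) then 1 else 0))
    (fun σ => (if j ∈ (Finset.range k).biUnion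
          (fun t => auctionStep c σ t (runRemaining M (auctionStep c σ) t)) then 1 else 0))
    (fun x => rfl)
  rw [← hE, ← hA, Fintype.sum_prod_type, Fintype.sum_prod_type]
  rw [Finset.mul_sum, Finset.mul_sum, ← Finset.sum_add_distrib]
  have : k * (m + 1).factorial
      = ∑ _τ : Equiv.Perm (Fin m), k * (m + 1) := by
    rw [Finset.sum_const, Finset.card_univ, Fintype.card_perm, Fintype.card_fin, smul_eq_mul,
      Nat.factorial_succ]
    ring
  rw [this]
  exact Finset.sum_le_sum fun τ _ => countLemma M c k hkn i j hj τ
end KL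

section Step
variable {ι : Type*} [DecidableEq ι]

lemma stepBound {n : ℕ} (M : Finset ι) (v : Fin n → Finset ι → ℝ)
    (O : Fin n → Finset ι) (q : ι → ℝ) (hq : SupportedBy M v O q)
    (p : ι → ℝ) (hp : ∀ j, 0 ≤ p j) (hpq : ∀ i, ∀ j ∈ O i, p j ≤ q j)
    (c : Fin n → Finset ι → Finset ι)
    (hc : ∀ b : Fin n, ∀ R ⊆ M, c b R ⊆ R ∧
      ∀ S ⊆ R, v b S - ∑ j ∈ S, p j / 2 ≤ v b (c b R) - ∑ j ∈ c b R, p j / 2)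
    (σ : Equiv.Perm (Fin n)) (t : ℕ) (ht : t < n) :
    (1 / 2) * ∑ j ∈ O (σ ⟨t, ht⟩) ∩ runRemaining M (auctionStep c σ) t, q j
      ≤ v (σ ⟨t, ht⟩) (auctionStep c σ t (runRemaining M (auctionStep c σ) t)) := by
  set R := runRemaining M (auctionStep c σ) t with hR
  have hRM : R ⊆ M := runRemaining_subset M _ t
  set b := σ ⟨t, ht⟩ with hb
  obtain ⟨hcsub, hcopt⟩ := hc b R hRM
  have hstep : auctionStep c σ t R = c b R := dif_pos ht
  obtain ⟨a, ha0, haS, haO, haq⟩ := hq.2 b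
  set S := O b ∩ R with hS
  have hSR : S ⊆ R := Finset.inter_subset_right
  have hSO : S ⊆ O b := Finset.inter_subset_left
  have h1 : ∑ j ∈ S, q j ≤ v b S := by
    have : ∑ j ∈ S, q j = ∑ j ∈ S, a j :=
      Finset.sum_congr rfl fun j hj => haq j (hSO hj)
    rw [this]
    exact haS S (hSR.trans hRM)
  have h2 := hcopt S hSR
  have h3 : 0 ≤ ∑ j ∈ c b R, p j / 2 :=
    Finset.sum_nonneg fun j _ => div_nonneg (hp j) (by norm_num)
  have h4 : ∑ j ∈ S, p j / 2 ≤ ∑ j ∈ S, q j / 2 :=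
    Finset.sum_le_sum fun j hj => by linarith [hpq b j (hSO hj)]
  have h5 : ∑ j ∈ S, q j / 2 = (∑ j ∈ S, q j) / 2 := by
    rw [Finset.sum_div]
  rw [hstep]
  linarith

end Step

section Reindex
variable {ι : Type*} [DecidableEq ι]

lemma reindex {n k : ℕ} (hkn : k ≤ n) (F : Fin n → ℕ → ℝ) (σ : Equiv.Perm (Fin n)) :
    ∑ t : Fin k, F (σ (Fin.castLE hkn t)) (t : ℕ)
      = ∑ i : Fin n, if ((σ.symm i : Fin n) : ℕ) < k
          then F i ((σ.symm i : Fin n) : ℕ) else 0 := by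
  classical
  set f' : ℕ → ℝ := fun t => if h : t < n then F (σ ⟨t, h⟩) t else 0 with hf'
  have hL : ∑ t : Fin k, F (σ (Fin.castLE hkn t)) (t : ℕ) = ∑ t ∈ Finset.range k, f' t := by
    rw [← Fin.sum_univ_eq_sum_range f' k]
    refine Finset.sum_congr rfl fun t _ => ?_
    simp only [hf']
    rw [dif_pos (lt_of_lt_of_le t.isLt hkn)]
    rfl
  have hR : ∀ i : Fin n,
      (if ((σ.symm i : Fin n) : ℕ) < k then F i ((σ.symm i : Fin n) : ℕ) else 0)
        = (fun t : Fin n => if (t : ℕ) < k then F (σ t) (t : ℕ) else 0) (σ.symm i) := by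
    intro i
    simp only [Equiv.apply_symm_apply]
  rw [hL, Finset.sum_congr rfl fun i _ => hR i,
    Equiv.sum_comp σ.symm (fun t : Fin n => if (t : ℕ) < k then F (σ t) (t : ℕ) else 0)]
  have hR2 : ∑ t : Fin n, (if (t : ℕ) < k then F (σ t) (t : ℕ) else 0)
      = ∑ t ∈ Finset.range n, (if t < k then f' t else 0) := by
    rw [← Fin.sum_univ_eq_sum_range (fun t => if t < k then f' t else 0) n]
    refine Finset.sum_congr rfl fun t _ => ?_
    by_cases h : (t : ℕ) < k
    · rw [if_pos h, if_pos h]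
      simp only [hf']
      rw [dif_pos t.isLt]
    · rw [if_neg h, if_neg h]
  have hfilter : (Finset.range n).filter (fun t => t < k) = Finset.range k := by
    ext a; simp only [Finset.mem_filter, Finset.mem_range]; omega
  rw [hR2, ← Finset.sum_filter, hfilter]

end Reindex


/-- cf. Lemma 5.3: running the fixed-price auction with prices `p/2` on the
first `k` bidders of a uniformly random order with sold set `A` and welfare `Val`, one has
`(2n/k)·E[Val] + E[q(A ∩ D)] ≥ q(D)` where `D = ⋃ i, O i`. Expectations over the `n!`
permutations are written as averages. -/
theorem stmt6 {ι : Type*} [DecidableEq ι] {n : ℕ} (hn : 1 ≤ n) (M : Finset ι)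
    (v : Fin n → Finset ι → ℝ)
    (hval : ∀ i, IsValuation M (v i)) (hxos : ∀ i, IsXOS M (v i))
    (O : Fin n → Finset ι) (hOsub : ∀ i, O i ⊆ M)
    (hOdisj : ∀ i i', i ≠ i' → Disjoint (O i) (O i'))
    (q : ι → ℝ) (hq : SupportedBy M v O q)
    (p : ι → ℝ) (hp : ∀ j, 0 ≤ p j)
    (hpq : ∀ j ∈ Finset.univ.biUnion O, p j ≤ q j)
    (k : ℕ) (hk1 : 1 ≤ k) (hkn : k ≤ n)
    (c : Fin n → Finset ι → Finset ι)
    (hc : ∀ b : Fin n, ∀ R ⊆ M, c b R ⊆ R ∧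
      ∀ S ⊆ R, v b S - ∑ j ∈ S, p j / 2 ≤ v b (c b R) - ∑ j ∈ c b R, p j / 2) :
    (2 * (n : ℝ) / (k : ℝ)) *
        ((∑ σ : Equiv.Perm (Fin n), ∑ t : Fin k,
            v (σ (Fin.castLE hkn t))
              (auctionStep c σ (t : ℕ) (runRemaining M (auctionStep c σ) (t : ℕ))))
          / (Nat.factorial n : ℝ)) +
      (∑ σ : Equiv.Perm (Fin n),
          ∑ j ∈ ((Finset.range k).biUnion
                (fun t => auctionStep c σ t (runRemaining M (auctionStep c σ) t)))
              ∩ Finset.univ.biUnion O,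
            q j)
        / (Nat.factorial n : ℝ)
    ≥ ∑ j ∈ Finset.univ.biUnion O, q j := by
  classical
  obtain ⟨m, rfl⟩ : ∃ m, n = m + 1 := ⟨n - 1, by omega⟩
  have hpq' : ∀ i, ∀ j ∈ O i, p j ≤ q j :=
    fun i j hj => hpq j (Finset.mem_biUnion.mpr ⟨i, Finset.mem_univ i, hj⟩)
  have hDisj : Set.PairwiseDisjoint ((Finset.univ : Finset (Fin (m + 1))) : Set (Fin (m + 1))) O :=
    fun i _ i' _ hne => hOdisj i i' hne
  have hF : (0 : ℝ) < ((m + 1).factorial : ℝ) := by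
    exact_mod_cast Nat.factorial_pos (m + 1)
  have hk0 : (0 : ℝ) < (k : ℝ) := by exact_mod_cast hk1
  set S1 := ∑ σ : Equiv.Perm (Fin (m + 1)), ∑ t : Fin k,
      v (σ (Fin.castLE hkn t))
        (auctionStep c σ (t : ℕ) (runRemaining M (auctionStep c σ) (t : ℕ))) with hS1
  set S2 := ∑ σ : Equiv.Perm (Fin (m + 1)),
      ∑ j ∈ ((Finset.range k).biUnion
            (fun t => auctionStep c σ t (runRemaining M (auctionStep c σ) t)))
          ∩ Finset.univ.biUnion O, q j with hS2
  rw [ge_iff_le,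
    show (2 * ((m + 1 : ℕ) : ℝ) / (k : ℝ)) * (S1 / (Nat.factorial (m + 1) : ℝ))
          + S2 / (Nat.factorial (m + 1) : ℝ)
        = ((2 * ((m + 1 : ℕ) : ℝ) / (k : ℝ)) * S1 + S2) / (Nat.factorial (m + 1) : ℝ) from by
      ring,
    le_div_iff₀ hF]
  -- the per-(i,j) key inequality
  have key : ∀ i : Fin (m + 1), ∀ j ∈ O i,
      ((Nat.factorial (m + 1) : ℝ)) * q j ≤
        (((m + 1 : ℕ) : ℝ) / (k : ℝ)) *
          (∑ σ : Equiv.Perm (Fin (m + 1)),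
            if ((σ.symm i : Fin (m + 1)) : ℕ) < k ∧
                j ∈ runRemaining M (auctionStep c σ) ((σ.symm i : Fin (m + 1)) : ℕ)
              then q j else 0)
        + ∑ σ : Equiv.Perm (Fin (m + 1)),
            if j ∈ (Finset.range k).biUnion
                (fun t => auctionStep c σ t (runRemaining M (auctionStep c σ) t))
              then q j else 0 := by
    intro i j hj
    have hjM : j ∈ M := hOsub i hj
    have hkl := KL M c k hkn i j hjM
    have hq0 : 0 ≤ q j := hq.1 j
    set cE : ℕ := ∑ σ : Equiv.Perm (Fin (m + 1)),
        (if ((σ.symm i : Fin (m + 1)) : ℕ) < k ∧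
            j ∈ runRemaining M (auctionStep c σ) ((σ.symm i : Fin (m + 1)) : ℕ)
          then 1 else 0) with hcE
    set cA : ℕ := ∑ σ : Equiv.Perm (Fin (m + 1)),
        (if j ∈ (Finset.range k).biUnion
            (fun t => auctionStep c σ t (runRemaining M (auctionStep c σ) t))
          then 1 else 0) with hcA
    have hqE : (∑ σ : Equiv.Perm (Fin (m + 1)),
        if ((σ.symm i : Fin (m + 1)) : ℕ) < k ∧
            j ∈ runRemaining M (auctionStep c σ) ((σ.symm i : Fin (m + 1)) : ℕ)
          then q j else 0) = (cE : ℝ) * q j := by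
      rw [hcE, Nat.cast_sum, Finset.sum_mul]
      refine Finset.sum_congr rfl fun σ _ => ?_
      split_ifs <;> simp
    have hqA : (∑ σ : Equiv.Perm (Fin (m + 1)),
        if j ∈ (Finset.range k).biUnion
            (fun t => auctionStep c σ t (runRemaining M (auctionStep c σ) t))
          then q j else 0) = (cA : ℝ) * q j := by
      rw [hcA, Nat.cast_sum, Finset.sum_mul]
      refine Finset.sum_congr rfl fun σ _ => ?_
      split_ifs <;> simp
    rw [hqE, hqA]
    have hcast : (k : ℝ) * ((Nat.factorial (m + 1) : ℕ) : ℝ)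
        ≤ ((m + 1 : ℕ) : ℝ) * (cE : ℝ) + (k : ℝ) * (cA : ℝ) := by
      exact_mod_cast hkl
    have heq : (((m + 1 : ℕ) : ℝ) / (k : ℝ)) * ((cE : ℝ) * q j) + (cA : ℝ) * q j
        = ((((m + 1 : ℕ) : ℝ) * (cE : ℝ) + (k : ℝ) * (cA : ℝ)) * q j) / (k : ℝ) := by
      field_simp
    rw [heq, le_div_iff₀ hk0]
    nlinarith [mul_le_mul_of_nonneg_right hcast hq0]
  -- per-permutation welfare bound
  have hval1 : ∀ σ : Equiv.Perm (Fin (m + 1)),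
      (1 / 2 : ℝ) * ∑ i : Fin (m + 1), ∑ j ∈ O i,
          (if ((σ.symm i : Fin (m + 1)) : ℕ) < k ∧
              j ∈ runRemaining M (auctionStep c σ) ((σ.symm i : Fin (m + 1)) : ℕ)
            then q j else 0)
        ≤ ∑ t : Fin k, v (σ (Fin.castLE hkn t))
            (auctionStep c σ (t : ℕ) (runRemaining M (auctionStep c σ) (t : ℕ))) := by
    intro σ
    have h1 : ∑ t : Fin k, (1 / 2 : ℝ) *
          ∑ j ∈ O (σ (Fin.castLE hkn t)) ∩ runRemaining M (auctionStep c σ) (t : ℕ), q j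
        ≤ ∑ t : Fin k, v (σ (Fin.castLE hkn t))
            (auctionStep c σ (t : ℕ) (runRemaining M (auctionStep c σ) (t : ℕ))) := by
      refine Finset.sum_le_sum fun t _ => ?_
      exact stepBound M v O q hq p hp hpq' c hc σ (t : ℕ) (lt_of_lt_of_le t.isLt hkn)
    have h2 := reindex hkn
      (fun b u => ∑ j ∈ O b ∩ runRemaining M (auctionStep c σ) u, q j) σ
    have h3 : ∀ i : Fin (m + 1),
        (if ((σ.symm i : Fin (m + 1)) : ℕ) < k
          then ∑ j ∈ O i ∩ runRemaining M (auctionStep c σ) ((σ.symm i : Fin (m + 1)) : ℕ), q j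
          else 0)
        = ∑ j ∈ O i, (if ((σ.symm i : Fin (m + 1)) : ℕ) < k ∧
              j ∈ runRemaining M (auctionStep c σ) ((σ.symm i : Fin (m + 1)) : ℕ)
            then q j else 0) := by
      intro i
      by_cases hcond : ((σ.symm i : Fin (m + 1)) : ℕ) < k
      · rw [if_pos hcond]
        have hfil : O i ∩ runRemaining M (auctionStep c σ) ((σ.symm i : Fin (m + 1)) : ℕ)
            = (O i).filter
                (· ∈ runRemaining M (auctionStep c σ) ((σ.symm i : Fin (m + 1)) : ℕ)) := by
          ext a; simp [Finset.mem_filter]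
        rw [hfil, Finset.sum_filter]
        exact Finset.sum_congr rfl fun j _ => by simp [hcond]
      · rw [if_neg hcond]
        symm
        exact Finset.sum_eq_zero fun j _ => by simp [hcond]
    calc (1 / 2 : ℝ) * ∑ i : Fin (m + 1), ∑ j ∈ O i,
            (if ((σ.symm i : Fin (m + 1)) : ℕ) < k ∧
                j ∈ runRemaining M (auctionStep c σ) ((σ.symm i : Fin (m + 1)) : ℕ)
              then q j else 0)
        = (1 / 2 : ℝ) * ∑ t : Fin k,
            ∑ j ∈ O (σ (Fin.castLE hkn t)) ∩ runRemaining M (auctionStep c σ) (t : ℕ), q j := by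
          rw [Finset.sum_congr rfl fun i _ => (h3 i).symm, ← h2]
      _ = ∑ t : Fin k, (1 / 2 : ℝ) *
            ∑ j ∈ O (σ (Fin.castLE hkn t)) ∩ runRemaining M (auctionStep c σ) (t : ℕ), q j :=
          Finset.mul_sum _ _ _
      _ ≤ _ := h1
  -- rewrite S2
  have hS2' : S2 = ∑ σ : Equiv.Perm (Fin (m + 1)), ∑ i : Fin (m + 1), ∑ j ∈ O i,
      (if j ∈ (Finset.range k).biUnion
          (fun t => auctionStep c σ t (runRemaining M (auctionStep c σ) t))
        then q j else 0) := by
    rw [hS2]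
    refine Finset.sum_congr rfl fun σ _ => ?_
    rw [← Finset.sum_biUnion hDisj]
    have hfil : ((Finset.range k).biUnion
          (fun t => auctionStep c σ t (runRemaining M (auctionStep c σ) t)))
        ∩ Finset.univ.biUnion O
        = (Finset.univ.biUnion O).filter
            (· ∈ (Finset.range k).biUnion
              (fun t => auctionStep c σ t (runRemaining M (auctionStep c σ) t))) := by
      ext a; simp [Finset.mem_filter]; tauto
    rw [hfil, Finset.sum_filter]
  -- main chain
  have hQ : (∑ j ∈ Finset.univ.biUnion O, q j) * (Nat.factorial (m + 1) : ℝ)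
      = ∑ i : Fin (m + 1), ∑ j ∈ O i, ((Nat.factorial (m + 1) : ℝ) * q j) := by
    rw [Finset.sum_biUnion hDisj, Finset.sum_mul]
    refine Finset.sum_congr rfl fun i _ => ?_
    rw [Finset.sum_mul]
    exact Finset.sum_congr rfl fun j _ => mul_comm _ _
  have hcommE : ∑ i : Fin (m + 1), ∑ j ∈ O i, ∑ σ : Equiv.Perm (Fin (m + 1)),
        (if ((σ.symm i : Fin (m + 1)) : ℕ) < k ∧
            j ∈ runRemaining M (auctionStep c σ) ((σ.symm i : Fin (m + 1)) : ℕ)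
          then q j else 0)
      = ∑ σ : Equiv.Perm (Fin (m + 1)), ∑ i : Fin (m + 1), ∑ j ∈ O i,
        (if ((σ.symm i : Fin (m + 1)) : ℕ) < k ∧
            j ∈ runRemaining M (auctionStep c σ) ((σ.symm i : Fin (m + 1)) : ℕ)
          then q j else 0) := by
    rw [Finset.sum_congr rfl fun i (_ : i ∈ Finset.univ) => Finset.sum_comm]
    exact Finset.sum_comm
  have hcommA : ∑ i : Fin (m + 1), ∑ j ∈ O i, ∑ σ : Equiv.Perm (Fin (m + 1)),
        (if j ∈ (Finset.range k).biUnion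
            (fun t => auctionStep c σ t (runRemaining M (auctionStep c σ) t))
          then q j else 0)
      = ∑ σ : Equiv.Perm (Fin (m + 1)), ∑ i : Fin (m + 1), ∑ j ∈ O i,
        (if j ∈ (Finset.range k).biUnion
            (fun t => auctionStep c σ t (runRemaining M (auctionStep c σ) t))
          then q j else 0) := by
    rw [Finset.sum_congr rfl fun i (_ : i ∈ Finset.univ) => Finset.sum_comm]
    exact Finset.sum_comm
  calc (∑ j ∈ Finset.univ.biUnion O, q j) * (Nat.factorial (m + 1) : ℝ)
      = ∑ i : Fin (m + 1), ∑ j ∈ O i, ((Nat.factorial (m + 1) : ℝ) * q j) := hQ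
    _ ≤ ∑ i : Fin (m + 1), ∑ j ∈ O i,
          ((((m + 1 : ℕ) : ℝ) / (k : ℝ)) *
            (∑ σ : Equiv.Perm (Fin (m + 1)),
              if ((σ.symm i : Fin (m + 1)) : ℕ) < k ∧
                  j ∈ runRemaining M (auctionStep c σ) ((σ.symm i : Fin (m + 1)) : ℕ)
                then q j else 0)
          + ∑ σ : Equiv.Perm (Fin (m + 1)),
              if j ∈ (Finset.range k).biUnion
                  (fun t => auctionStep c σ t (runRemaining M (auctionStep c σ) t))
                then q j else 0) :=
        Finset.sum_le_sum fun i _ => Finset.sum_le_sum fun j hj => key i j hj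
    _ = (((m + 1 : ℕ) : ℝ) / (k : ℝ)) *
          (∑ σ : Equiv.Perm (Fin (m + 1)), ∑ i : Fin (m + 1), ∑ j ∈ O i,
            (if ((σ.symm i : Fin (m + 1)) : ℕ) < k ∧
                j ∈ runRemaining M (auctionStep c σ) ((σ.symm i : Fin (m + 1)) : ℕ)
              then q j else 0))
        + S2 := by
        rw [hS2', ← hcommE, ← hcommA]
        rw [Finset.mul_sum]
        rw [← Finset.sum_add_distrib]
        refine Finset.sum_congr rfl fun i _ => ?_
        rw [Finset.mul_sum, ← Finset.sum_add_distrib]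
    _ ≤ (2 * ((m + 1 : ℕ) : ℝ) / (k : ℝ)) * S1 + S2 := by
        refine add_le_add_left ?_ S2
        have hrw : (((m + 1 : ℕ) : ℝ) / (k : ℝ)) *
            (∑ σ : Equiv.Perm (Fin (m + 1)), ∑ i : Fin (m + 1), ∑ j ∈ O i,
              (if ((σ.symm i : Fin (m + 1)) : ℕ) < k ∧
                  j ∈ runRemaining M (auctionStep c σ) ((σ.symm i : Fin (m + 1)) : ℕ)
                then q j else 0))
            = (2 * ((m + 1 : ℕ) : ℝ) / (k : ℝ)) *
              (∑ σ : Equiv.Perm (Fin (m + 1)), (1 / 2 : ℝ) * ∑ i : Fin (m + 1), ∑ j ∈ O i,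
                (if ((σ.symm i : Fin (m + 1)) : ℕ) < k ∧
                    j ∈ runRemaining M (auctionStep c σ) ((σ.symm i : Fin (m + 1)) : ℕ)
                  then q j else 0)) := by
          rw [Finset.mul_sum, Finset.mul_sum]
          exact Finset.sum_congr rfl fun σ _ => by ring
        rw [hrw]
        refine mul_le_mul_of_nonneg_left ?_ (by positivity)
        rw [hS1]
        exact Finset.sum_le_sum fun σ _ => hval1 σ
end
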